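/- Under y_i ≠ 0, x_j ≠ x_k, z_i > 0, λ_i > 0, r > 0, the gradient with respect to p_i = (x_i, y_i, z_i, λ_i) of h_IJK(p_i) = (x_i + x_j)/(2(x_k − x_j)) + (x_i − x_j)((x_i² − R_i²) − (x_j² − R_j²))/(2(x_k − x_j) y_i²), with R_i = r z_i/λ_i, equals the zero vector if and only if both x_i = x_j and x_i² + y_i² − R_i² = x_j² − R_j² hold. -/

import Mathlib

/-!
The partial derivative in `z` is `-(x - xj) r² z / ((xk - xj) y² l²)`, a nonzero multiple of
`x - xj`, so a critical point has `x = xj`. That kills the partials in `y`, `z` and `l`, and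
turns the numerator `3x² - 2 xj x + y² - R² - (xj² - Rj²)` of the partial in `x` into
`x² + y² - R² - (xj² - Rj²)`.
-/

/-- h_IJK as a function of the state of agent i (frame Σ_d, agents j, k fixed). -/
noncomputable def hIJKf (r xj Rj xk x y z l : ℝ) : ℝ :=
  (x + xj) / (2 * (xk - xj))
    + (x - xj) * ((x^2 - (r * z / l)^2) - (xj^2 - Rj^2)) / (2 * (xk - xj) * y^2)

namespace hIJKf

variable {r xj Rj xk x y z l : ℝ}

theorem hasDerivAt_x (hy : y ≠ 0) :
    HasDerivAt (fun t => hIJKf r xj Rj xk t y z l)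
      ((3 * x^2 - 2 * xj * x + (y^2 - (r * z / l)^2) - (xj^2 - Rj^2))
        / (2 * (xk - xj) * y^2)) x := by
  refine (((hasDerivAt_id' x).add_const xj |>.div_const (2 * (xk - xj))).add
    ((((hasDerivAt_id' x).sub_const xj).mul
      (((hasDerivAt_pow 2 x).sub_const ((r * z / l)^2)).sub_const (xj^2 - Rj^2))).div_const
        (2 * (xk - xj) * y^2))).congr_deriv ?_
  field_simp
  ring

theorem hasDerivAt_y (hjk : xj ≠ xk) (hy : y ≠ 0) :
    HasDerivAt (fun t => hIJKf r xj Rj xk x t z l)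
      (-((x - xj) * ((x^2 - (r * z / l)^2) - (xj^2 - Rj^2))) / ((xk - xj) * y^3)) y := by
  have hD : xk - xj ≠ 0 := sub_ne_zero.mpr hjk.symm
  refine ((hasDerivAt_const y ((x + xj) / (2 * (xk - xj)))).add
    ((hasDerivAt_const y ((x - xj) * ((x^2 - (r * z / l)^2) - (xj^2 - Rj^2)))).div
      ((hasDerivAt_pow 2 y).const_mul (2 * (xk - xj))) (by positivity))).congr_deriv ?_
  field_simp
  ring

theorem hasDerivAt_z :
    HasDerivAt (fun t => hIJKf r xj Rj xk x y t l)
      (-((x - xj) * r^2 * z) / ((xk - xj) * y^2 * l^2)) z := by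
  have hR : HasDerivAt (fun t => r * t / l) (r * 1 / l) z :=
    (hasDerivAt_id' z).const_mul r |>.div_const l
  refine ((hasDerivAt_const z ((x + xj) / (2 * (xk - xj)))).add
    ((hR.pow 2 |>.const_sub (x^2) |>.sub_const (xj^2 - Rj^2) |>.const_mul (x - xj)).div_const
      (2 * (xk - xj) * y^2))).congr_deriv ?_
  simp only [div_eq_mul_inv, mul_inv]
  ring

theorem hasDerivAt_l (hl : l ≠ 0) :
    HasDerivAt (fun t => hIJKf r xj Rj xk x y z t)
      ((x - xj) * r^2 * z^2 / ((xk - xj) * y^2 * l^3)) l := by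
  have hR : HasDerivAt (fun t => r * z / t) ((0 * l - r * z * 1) / l^2) l :=
    (hasDerivAt_const l (r * z)).fun_div (hasDerivAt_id' l) hl
  refine ((hasDerivAt_const l ((x + xj) / (2 * (xk - xj)))).add
    ((hR.pow 2 |>.const_sub (x^2) |>.sub_const (xj^2 - Rj^2) |>.const_mul (x - xj)).div_const
      (2 * (xk - xj) * y^2))).congr_deriv ?_
  simp only [div_eq_mul_inv, mul_inv]
  ring

end hIJKf

/-- The gradient of h_IJK with respect to p_i = (x_i, y_i, z_i, λ_i) vanishes
iff x_i = x_j and x_i² + y_i² − R_i² = x_j² − R_j², i.e. iff the radical axis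
L_ij lies on the line JK. -/
theorem hIJK_grad_zero_iff
    (r x y z l xj Rj xk : ℝ) (hy : y ≠ 0) (hjk : xj ≠ xk)
    (hz : 0 < z) (hl : 0 < l) (hr : 0 < r) :
    (deriv (fun t : ℝ => hIJKf r xj Rj xk t y z l) x = 0 ∧
     deriv (fun t : ℝ => hIJKf r xj Rj xk x t z l) y = 0 ∧
     deriv (fun t : ℝ => hIJKf r xj Rj xk x y t l) z = 0 ∧
     deriv (fun t : ℝ => hIJKf r xj Rj xk x y z t) l = 0) ↔
    (x = xj ∧ x^2 + y^2 - (r * z / l)^2 = xj^2 - Rj^2) := by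
  have hD : xk - xj ≠ 0 := sub_ne_zero.mpr hjk.symm
  have hden : 2 * (xk - xj) * y^2 ≠ 0 := by simp [hD, hy]
  rw [(hIJKf.hasDerivAt_x hy).deriv, (hIJKf.hasDerivAt_y hjk hy).deriv,
    hIJKf.hasDerivAt_z.deriv, (hIJKf.hasDerivAt_l hl.ne').deriv]
  constructor
  · rintro ⟨hdx, -, hdz, -⟩
    obtain rfl : x = xj := by
      simpa [sub_eq_zero, hD, hy, hr.ne', hz.ne', hl.ne'] using hdz
    exact ⟨rfl, by linear_combination (div_eq_zero_iff.mp hdx).resolve_right hden⟩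
  · rintro ⟨rfl, h⟩
    exact ⟨div_eq_zero_iff.mpr (.inl (by linear_combination h)), by simp, by simp, by simp⟩
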